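/- Let n be a positive integer, q = 2^n, and w ∈ F_{q^2} \ F_q with σ ∈ F_q satisfying σ^2 w^{q+1} ≠ 1. Then the number of ε ∈ F_q^* such that Tr_{F_{q^2}/F_2}(εw/(1+σw)^2) = 1 is exactly q/2. -/

import Mathlib

/-!
Put `x = w / (1 + σw)²` and `u = x + x^q`. For `ε ∈ 𝔽_q` the absolute trace splits as
`Tr_{𝔽_{q²}/𝔽₂}(εx) = Tr_{𝔽_q/𝔽₂}(εu)`, and `u ≠ 0` because
`(1 + σw)²(1 + σw^q)² u = (w + w^q)(1 + σ²w^{q+1})`. Hence `ε ↦ Tr(εx)` is an additive map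
`𝔽_q → 𝔽₂`, and it is nonzero: `Tr_{𝔽_q/𝔽₂}` is a polynomial of degree `q/2`, so it cannot
vanish on all of `𝔽_q`. Translation by an `ε₀` of trace one swaps the two fibres, so each has
`q/2` elements, and `ε = 0` lies in the fibre over `0`.
-/

open Polynomial Finset

section CharTwo

variable {R : Type*} [CommRing R] [CharP R 2]

variable (R) in
/-- On `𝔽_{2^m}` this is the absolute trace `Tr_{𝔽_{2^m}/𝔽₂}`. -/
noncomputable def absTrace (m : ℕ) : R →+ R :=
  ∑ i ∈ range m, (iterateFrobenius R 2 i).toAddMonoidHom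

theorem absTrace_apply (m : ℕ) (y : R) : absTrace R m y = ∑ i ∈ range m, y ^ 2 ^ i := by
  simp [absTrace, iterateFrobenius_def]

theorem absTrace_sq_add_self (m : ℕ) (y : R) :
    absTrace R m y ^ 2 + absTrace R m y = y ^ 2 ^ m + y := by
  have h : absTrace R m y ^ 2 + y = absTrace R m y + y ^ 2 ^ m := by
    rw [absTrace_apply, CharTwo.sum_sq, ← sum_range_succ, sum_range_succ']
    simp [← pow_mul, ← pow_succ]
  linear_combination h + (absTrace R m y - y) * CharTwo.two_eq_zero (R := R)

theorem absTrace_eq_zero_or_eq_one [IsDomain R] {m : ℕ} {y : R} (hy : y ^ 2 ^ m = y) :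
    absTrace R m y = 0 ∨ absTrace R m y = 1 := by
  have h : absTrace R m y * (absTrace R m y + 1) = 0 := by
    rw [mul_add_one, ← sq, absTrace_sq_add_self, hy, CharTwo.add_self_eq_zero]
  simpa [CharTwo.add_eq_zero] using h

theorem absTrace_two_mul (m : ℕ) (y : R) :
    absTrace R (2 * m) y = absTrace R m (y + y ^ 2 ^ m) := by
  simp only [map_add, absTrace_apply, two_mul, sum_range_add, pow_add, pow_mul]

theorem exists_absTrace_ne_zero [IsDomain R] {m : ℕ} (hm : 0 < m) (s : Finset R)
    (hs : 2 ^ (m - 1) < #s) : ∃ y ∈ s, absTrace R m y ≠ 0 := by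
  set P : R[X] := ∑ i ∈ range m, X ^ 2 ^ i
  have hP : P ≠ 0 := by
    intro h
    have := congrArg (coeff · 1) h
    simp [P, coeff_X_pow, eq_comm (a := 1), hm] at this
  have hdeg : P.natDegree ≤ 2 ^ (m - 1) :=
    natDegree_sum_le_of_forall_le _ _ fun i hi ↦ by
      rw [natDegree_X_pow]
      exact Nat.pow_le_pow_right two_pos (by grind)
  by_contra! h
  refine hP (eq_zero_of_natDegree_lt_card_of_eval_eq_zero' P s (fun y hy ↦ ?_) (hdeg.trans_lt hs))
  simpa [P, eval_finsetSum, absTrace_apply] using h y hy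

theorem card_filter_eq_one_mul_two [Nontrivial R] [DecidableEq R] {S : Finset R} (f : R →+ R)
    (hS : ∀ a ∈ S, ∀ b ∈ S, a + b ∈ S) (hf : ∀ a ∈ S, f a = 0 ∨ f a = 1)
    (h₁ : ∃ a ∈ S, f a = 1) : #{a ∈ S | f a = 1} * 2 = #S := by
  obtain ⟨a₀, ha₀, hfa₀⟩ := h₁
  have hswap : #{a ∈ S | f a = 1} = #{a ∈ S | f a ≠ 1} := by
    refine card_nbij' (· + a₀) (· + a₀) ?_ ?_ ?_ ?_
    · intro a ha
      simp only [coe_filter, Set.mem_ofPred_eq] at ha ⊢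
      refine ⟨hS a ha.1 a₀ ha₀, ?_⟩
      rw [map_add, ha.2, hfa₀, CharTwo.add_self_eq_zero]
      exact zero_ne_one
    · intro a ha
      simp only [coe_filter, Set.mem_ofPred_eq] at ha ⊢
      refine ⟨hS a ha.1 a₀ ha₀, ?_⟩
      rw [map_add, (hf a ha.1).resolve_right ha.2, hfa₀, zero_add]
    all_goals exact fun a _ ↦ CharTwo.add_cancel_right a a₀
  rw [mul_two]
  nth_rewrite 2 [hswap]
  exact card_filter_add_card_filter_not _

theorem div_sq_add_map_ne_zero {F : Type*} [Field F] [CharP F 2] (φ : F →+* F) {w σ : F}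
    (hw : φ w ≠ w) (hσ : φ σ = σ) (hσw : σ ^ 2 * (φ w * w) ≠ 1) :
    w / (1 + σ * w) ^ 2 + φ (w / (1 + σ * w) ^ 2) ≠ 0 := by
  have hd : 1 + σ * w ≠ 0 := by
    rw [Ne, CharTwo.add_eq_zero]
    intro h
    have hσ0 : σ ≠ 0 := by rintro rfl; simp at h
    refine hw (mul_left_cancel₀ hσ0 ?_)
    rw [← h, ← hσ, ← map_mul, ← h, map_one]
  have hd' : 1 + σ * φ w ≠ 0 := by simpa [hσ] using (map_ne_zero φ).2 hd
  have hnum : w * (1 + σ * φ w) ^ 2 + (1 + σ * w) ^ 2 * φ w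
      = (w + φ w) * (1 + σ ^ 2 * (φ w * w)) := by
    linear_combination (2 * σ * w * φ w) * CharTwo.two_eq_zero (R := F)
  simp only [map_div₀, map_pow, map_add, map_one, map_mul, hσ]
  rw [div_add_div _ _ (pow_ne_zero 2 hd) (pow_ne_zero 2 hd'), hnum]
  refine div_ne_zero (mul_ne_zero ?_ ?_) (by positivity)
  · rw [Ne, CharTwo.add_eq_zero]
    exact fun h ↦ hw h.symm
  · rw [Ne, CharTwo.add_eq_zero]
    exact fun h ↦ hσw h.symm

end CharTwo

theorem sub_dvd_pow_pow_sub {R : Type*} [CommRing R] (a : R) (q k : ℕ) :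
    a ^ q - a ∣ a ^ q ^ k - a := by
  induction k with
  | zero => simp
  | succ k ih =>
    have h : a ^ q ^ (k + 1) - a = ((a ^ q ^ k) ^ q - a ^ q) + (a ^ q - a) := by ring
    rw [h]
    exact dvd_add (ih.trans (sub_dvd_pow_sub_pow _ _ _)) dvd_rfl

theorem card_filter_pow_eq_self {F : Type*} [Field F] [Fintype F] [DecidableEq F] {q k : ℕ}
    (hq : 1 < q) (hF : Fintype.card F = q ^ k) : #{a : F | a ^ q = a} = q := by
  set P : F[X] := X ^ q - X
  have hQ : (X ^ Fintype.card F - X : F[X]) ≠ 0 :=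
    FiniteField.X_pow_card_sub_X_ne_zero F Fintype.one_lt_card
  have hPQ : P ∣ X ^ Fintype.card F - X := hF ▸ sub_dvd_pow_pow_sub X q k
  have hroots : P.roots ≤ univ.val :=
    FiniteField.roots_X_pow_card_sub_X F ▸ roots.le_of_dvd hQ hPQ
  have hsplit : P.Splits := by
    have hQsplit := splits_X_pow_nat_card_sub_X (K := F)
    rw [Nat.card_eq_fintype_card] at hQsplit
    exact hQsplit.of_dvd hQ hPQ
  calc #{a : F | a ^ q = a} = #P.roots.toFinset := by
        congr 1
        ext a
        simp [P, FiniteField.X_pow_card_sub_X_ne_zero F hq, sub_eq_zero]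
    _ = Multiset.card P.roots :=
        Multiset.toFinset_card_of_nodup (Multiset.nodup_of_le hroots univ.nodup)
    _ = P.natDegree := splits_iff_card_roots.1 hsplit
    _ = q := FiniteField.X_pow_card_sub_X_natDegree_eq F hq

theorem card_filter_absTrace_mul_eq_one_mul_two {F : Type*} [Field F] [Fintype F]
    [DecidableEq F] [CharP F 2] {n : ℕ} (hn : 0 < n) (hF : Fintype.card F = 2 ^ (2 * n)) {x : F}
    (hx : x + x ^ 2 ^ n ≠ 0) :
    #{ε : F | ε ^ 2 ^ n = ε ∧ absTrace F (2 * n) (ε * x) = 1} * 2 = 2 ^ n := by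
  set S : Finset F := {a | a ^ 2 ^ n = a}
  set f : F →+ F := (absTrace F (2 * n)).comp (AddMonoidHom.mulRight x)
  have hcardS : #S = 2 ^ n :=
    card_filter_pow_eq_self (Nat.one_lt_two_pow hn.ne') (by rwa [← pow_mul, mul_comm])
  have hfS : ∀ ε ∈ S, f ε = absTrace F n (ε * (x + x ^ 2 ^ n)) := by
    intro ε hε
    simp only [S, mem_filter] at hε
    simp [f, absTrace_two_mul, mul_pow, hε.2, mul_add]
  have hf01 : ∀ ε ∈ S, f ε = 0 ∨ f ε = 1 := fun ε _ ↦
    absTrace_eq_zero_or_eq_one (by rw [← hF, FiniteField.pow_card])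
  have hf1 : ∃ ε ∈ S, f ε = 1 := by
    obtain ⟨y, hy, hy0⟩ := exists_absTrace_ne_zero hn (S.image (· * (x + x ^ 2 ^ n))) (by
      rw [card_image_of_injective _ (mul_left_injective₀ hx), hcardS]
      exact Nat.pow_lt_pow_right one_lt_two (by omega))
    obtain ⟨ε, hε, rfl⟩ := mem_image.1 hy
    exact ⟨ε, hε, (hf01 ε hε).resolve_left (hfS ε hε ▸ hy0)⟩
  have hcount := card_filter_eq_one_mul_two f (by simp +contextual [S, add_pow_char_pow]) hf01 hf1
  rwa [hcardS, filter_filter] at hcount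

theorem stmt_11 (n : ℕ) (hn : 0 < n) (q : ℕ) (hq : q = 2 ^ n)
    (F : Type*) [Field F] [Fintype F] [DecidableEq F] (hF : Fintype.card F = q ^ 2)
    (w σ : F) (hw : w ^ q ≠ w) (hσ : σ ^ q = σ) (hσw : σ ^ 2 * w ^ (q + 1) ≠ 1) :
    (Finset.univ.filter fun ε : F => ε ^ q = ε ∧ ε ≠ 0 ∧
      ∑ i ∈ Finset.range (2 * n), (ε * w / (1 + σ * w) ^ 2) ^ 2 ^ i = 1).card = q / 2 := by
  subst hq
  have hcardF : Fintype.card F = 2 ^ (2 * n) := by rw [hF, ← pow_mul, mul_comm]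
  have : CharP F 2 := charP_of_card_eq_prime_pow hcardF
  have hu := div_sq_add_map_ne_zero (iterateFrobenius F 2 n) hw hσ
    (by rwa [iterateFrobenius_def, ← pow_succ])
  rw [iterateFrobenius_def] at hu
  have hcount := card_filter_absTrace_mul_eq_one_mul_two hn hcardF hu
  have hfilter : (univ.filter fun ε : F => ε ^ 2 ^ n = ε ∧ ε ≠ 0 ∧
      ∑ i ∈ range (2 * n), (ε * w / (1 + σ * w) ^ 2) ^ 2 ^ i = 1) =
      ({ε | ε ^ 2 ^ n = ε ∧ absTrace F (2 * n) (ε * (w / (1 + σ * w) ^ 2)) = 1} : Finset F) := by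
    ext ε
    simp only [mem_filter, mem_univ, true_and, absTrace_apply, mul_div_assoc]
    refine ⟨fun h ↦ ⟨h.1, h.2.2⟩, fun ⟨h1, h2⟩ ↦ ⟨h1, ?_, h2⟩⟩
    rintro rfl
    simp at h2
  rw [hfilter]
  omega
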